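/- arXiv:2505.17264 — 6 statements merged into one kernel-verified Lean document; each statement's English description precedes it below -/
import Mathlib

section
/- Let D be a DFA over alphabet σ with state type Q, transition function step, start state ι with ι ∉ accept, and accepting set accept. Let C be the transition system with the same states and start state and transition step'(q,a) = q if q ∈ accept, and step'(q,a) = step q a otherwise. Then for every infinite word w : ℕ → σ, the run of C on w visits accept infinitely often (i.e., {n | ρ n ∈ accept} is infinite, where ρ is the run of C on w) if and only if there exists n ≥ 1 such that D.eval of the prefix of w of length n lies in accept. (Correctness of the Büchi automaton construction for the "guarantee" formula ∃φ: its ω-language is the set of infinite words having a nonempty prefix accepted by the DFA for φ.) -/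
/-- Correctness of the Büchi automaton construction for the "guarantee" formula `∃φ`:
making the accepting states of the DFA for `φ` into sinks yields a deterministic Büchi
automaton whose ω-language is the set of infinite words having a nonempty prefix
accepted by the DFA. -/
theorem exists_phi_buchi_correct {σ Q : Type*} (D : DFA σ Q)
    [DecidablePred (· ∈ D.accept)]
    (hι : D.start ∉ D.accept)
    (w : ℕ → σ) (ρ : ℕ → Q)
    (h0 : ρ 0 = D.start)
    (hs : ∀ n, ρ (n + 1) = if ρ n ∈ D.accept then ρ n else D.step (ρ n) (w n)) :
    {n | ρ n ∈ D.accept}.Infinite ↔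
      ∃ n ≥ 1, D.eval (List.ofFn fun i : Fin n => w i) ∈ D.accept := by
  -- sink property
  have sink : ∀ m, ρ m ∈ D.accept → ∀ k, m ≤ k → ρ k ∈ D.accept := by
    intro m hm k hk
    induction k with
    | zero => exact Nat.le_zero.mp hk ▸ hm
    | succ k ih =>
      rcases Nat.lt_or_ge m (k+1) with h | h
      · have hk' : ρ k ∈ D.accept := ih (Nat.lt_succ_iff.mp h)
        rw [hs k, if_pos hk']; exact hk'
      · have : m = k + 1 := le_antisymm hk h
        exact this ▸ hm
  -- eval of prefix matches run before reaching accept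
  have run_eval : ∀ n, (∀ m < n, ρ m ∉ D.accept) →
      ρ n = D.eval (List.ofFn fun i : Fin n => w i) := by
    intro n
    induction n with
    | zero => intro _; simpa [DFA.eval] using h0
    | succ n ih =>
      intro h
      have hn : ρ n = D.eval (List.ofFn fun i : Fin n => w i) :=
        ih fun m hm => h m (Nat.lt_succ_of_lt hm)
      rw [hs n, if_neg (h n (Nat.lt_succ_self n)), hn]
      rw [List.ofFn_succ']
      simp [DFA.eval, DFA.evalFrom]
  constructor
  · intro hinf
    obtain ⟨n, hn⟩ := hinf.nonempty
    have hex : ∃ n, ρ n ∈ D.accept := ⟨n, hn⟩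
    set m := Nat.find hex with hmdef
    have hm : ρ m ∈ D.accept := Nat.find_spec hex
    have hmin : ∀ k < m, ρ k ∉ D.accept := fun k hk => Nat.find_min hex hk
    have hm1 : 1 ≤ m := by
      rcases Nat.eq_zero_or_pos m with h | h
      · exact absurd (h ▸ hm) (h0 ▸ hι)
      · exact h
    exact ⟨m, hm1, run_eval m hmin ▸ hm⟩
  · rintro ⟨n, hn1, hn⟩
    by_cases h : ∃ m ≤ n, ρ m ∈ D.accept
    · obtain ⟨m, hm, hacc⟩ := h
      apply Set.infinite_of_injective_forall_mem (f := fun k : ℕ => m + k)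
      · intro a b hab; simpa using hab
      · intro k; exact sink m hacc (m + k) (Nat.le_add_right m k)
    · push_neg at h
      exact absurd (run_eval n (fun m hm => h m hm.le) ▸ hn) (h n le_rfl)
end

section
/- Let C be a DFA over alphabet σ with state type Q, transition function step, start state ι with ι ∉ accept, and accepting set accept. Let C' be the transition system with the same states and start state and transition step'(q,a) = q if q ∈ accept, and step'(q,a) = step q a otherwise. Then for every infinite word w : ℕ → σ, the run of C' on w visits the complement of accept infinitely often (i.e., {n | ρ n ∉ accept} is infinite, where ρ is the run of C' on w) if and only if for every n ≥ 1, C.eval of the prefix of w of length n does not lie in accept. (Correctness of the Büchi automaton construction for the "safety" formula ∀φ, where C is a DFA for ¬φ: its ω-language is the set of infinite words none of whose nonempty prefixes is accepted by C.) -/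
/-- Correctness of the Büchi automaton construction for the "safety" formula `∀φ`,
where `C` is a DFA for `¬φ`: making accepting states sinks and complementing the
accepting set yields a deterministic Büchi automaton whose ω-language is the set of
infinite words none of whose nonempty prefixes is accepted by `C`. -/
theorem forall_phi_buchi_correct {σ Q : Type*} (C : DFA σ Q)
    [DecidablePred (· ∈ C.accept)]
    (hι : C.start ∉ C.accept)
    (w : ℕ → σ) (ρ : ℕ → Q)
    (h0 : ρ 0 = C.start)
    (hs : ∀ n, ρ (n + 1) = if ρ n ∈ C.accept then ρ n else C.step (ρ n) (w n)) :
    {n | ρ n ∉ C.accept}.Infinite ↔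
      ∀ n ≥ 1, C.eval (List.ofFn fun i : Fin n => w i) ∉ C.accept := by
  set e : ℕ → Q := fun n => C.eval (List.ofFn fun i : Fin n => w i) with he
  have he0 : e 0 = C.start := by simp [he, DFA.eval]
  have hesucc : ∀ n, e (n + 1) = C.step (e n) (w n) := by
    intro n
    simp only [he]
    have : (List.ofFn fun i : Fin (n + 1) => w i)
        = (List.ofFn fun i : Fin n => w i) ++ [w n] := by
      rw [List.ofFn_succ']
      simp [List.concat_eq_append]
    rw [this]
    simp [DFA.eval, DFA.evalFrom]
  have key : ∀ n, (∀ k < n, e k ∉ C.accept) → ρ n = e n := by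
    intro n
    induction n with
    | zero => intro _; rw [h0, he0]
    | succ m ih =>
      intro h
      have hm : ρ m = e m := ih fun k hk => h k (hk.trans m.lt_succ_self)
      rw [hs m, hm, if_neg (h m m.lt_succ_self), hesucc]
  constructor
  · intro hinf
    by_contra hcon
    push_neg at hcon
    obtain ⟨n, hn1, hn⟩ := hcon
    have hex : ∃ N, e N ∈ C.accept := ⟨n, hn⟩
    classical
    set N := Nat.find hex with hN
    have hNacc : e N ∈ C.accept := Nat.find_spec hex
    have hlt : ∀ k < N, e k ∉ C.accept := fun k hk => Nat.find_min hex hk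
    have hρN : ρ N = e N := key N hlt
    have hstay : ∀ m, N ≤ m → ρ m ∈ C.accept := by
      intro m hm
      induction m with
      | zero =>
        have h' : N = 0 := Nat.le_zero.mp hm
        rw [← h', hρN]; exact hNacc
      | succ k ih =>
        rcases Nat.lt_or_ge N (k+1) with h | h
        · have hk : ρ k ∈ C.accept := ih (Nat.lt_succ_iff.mp h)
          rw [hs k, if_pos hk]; exact hk
        · have : N = k + 1 := le_antisymm hm h
          rw [← this, hρN]; exact hNacc
    have : {n | ρ n ∉ C.accept} ⊆ Set.Iio N := by
      intro m hm
      by_contra hmN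
      exact hm (hstay m (le_of_not_gt hmN))
    exact hinf.mono this (Set.finite_Iio N)
  · intro hall
    have heacc : ∀ k, e k ∉ C.accept := by
      intro k
      rcases Nat.eq_zero_or_pos k with rfl | hk
      · rw [he0]; exact hι
      · exact hall k hk
    have : ∀ n, ρ n = e n := fun n => key n fun k _ => heacc k
    have : {n | ρ n ∉ C.accept} = Set.univ := by
      ext n; simp [this n, heacc n]
    rw [this]
    exact Set.infinite_univ
end

section
/- Let D be a DFA over alphabet σ with state type Q, start state ι, transition function step and accepting set accept. Define the nondeterministic transition function step'' : (Q × Bool) → σ → Set (Q × Bool) by: step''((q,false), a) = {(step q a, false)} ∪ (if step q a ∈ accept then {(step q a, true)} else ∅), and step''((q,true), a) = (if q ∈ accept and step q a ∈ accept then {(step q a, true)} else ∅). Then for every infinite word w : ℕ → σ, there exists a run ρ : ℕ → Q × Bool with ρ 0 = (ι, false), ρ (n+1) ∈ step''(ρ n, w n) for all n, and {n | ρ n ∈ accept × {true}} infinite, if and only if there exists k : ℕ such that for all i ≥ k, D.eval of the prefix of w of length i lies in accept. (Correctness of the limit-deterministic Büchi automaton construction for the "persistence" formula ∃∀φ.)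 -/
open Classical in
/-- The limit-deterministic transition function obtained from a DFA: in the first
(`false`) copy the automaton runs deterministically but may nondeterministically jump
to the second (`true`) copy when reaching an accepting state; the second copy only
tracks accepting states. -/
noncomputable def ldbaStep {σ Q : Type*} (D : DFA σ Q) : Q × Bool → σ → Set (Q × Bool)
  | (q, false), a =>
      {(D.step q a, false)} ∪
        (if D.step q a ∈ D.accept then {(D.step q a, true)} else ∅)
  | (q, true), a =>
      if q ∈ D.accept ∧ D.step q a ∈ D.accept then {(D.step q a, true)} else ∅

/-- Correctness of the limit-deterministic Büchi automaton construction for the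
"persistence" formula `∃∀φ`. -/
theorem exists_forall_phi_ldba_correct {σ Q : Type*} (D : DFA σ Q) (w : ℕ → σ) :
    (∃ ρ : ℕ → Q × Bool,
        ρ 0 = (D.start, false) ∧
        (∀ n, ρ (n + 1) ∈ ldbaStep D (ρ n) (w n)) ∧
        {n | ρ n ∈ D.accept ×ˢ ({true} : Set Bool)}.Infinite) ↔
      ∃ k : ℕ, ∀ i ≥ k, D.eval (List.ofFn fun m : Fin i => w m) ∈ D.accept := by
  classical
  set P : ℕ → Q := fun n => D.eval (List.ofFn fun m : Fin n => w m) with hP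
  have hP0 : P 0 = D.start := by simp [hP, DFA.eval]
  have hPsucc : ∀ n, P (n + 1) = D.step (P n) (w n) := by
    intro n
    have : (List.ofFn fun m : Fin (n + 1) => w m)
        = (List.ofFn fun m : Fin n => w m) ++ [w n] := by
      rw [List.ofFn_succ']
      simp [List.concat_eq_append]
    simp only [hP, this, DFA.eval_append_singleton]
  constructor
  · rintro ⟨ρ, h0, hstep, hinf⟩
    -- first component follows P
    have hfst : ∀ n, (ρ n).1 = P n := by
      intro n
      induction n with
      | zero => rw [h0, hP0]
      | succ n ih =>
        have h := hstep n
        rcases hb : (ρ n).2 with _ | _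
        · have hρn : ρ n = ((ρ n).1, false) := by rw [← hb]
          rw [hρn] at h
          simp only [ldbaStep] at h
          rcases h with h | h
          · simp only [Set.mem_singleton_iff] at h
            rw [h, ih, hPsucc]
          · split_ifs at h with hc
            · simp only [Set.mem_singleton_iff] at h
              rw [h, ih, hPsucc]
            · exact absurd h (Set.notMem_empty _)
        · have hρn : ρ n = ((ρ n).1, true) := by rw [← hb]
          rw [hρn] at h
          simp only [ldbaStep] at h
          split_ifs at h with hc
          · simp only [Set.mem_singleton_iff] at h
            rw [h, ih, hPsucc]
          · exact absurd h (Set.notMem_empty _)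
    have htrue : ∀ n, (ρ n).2 = true → (ρ n).1 ∈ D.accept ∧ (ρ (n + 1)).2 = true := by
      intro n hb
      have h := hstep n
      have hρn : ρ n = ((ρ n).1, true) := by rw [← hb]
      rw [hρn] at h
      simp only [ldbaStep] at h
      split_ifs at h with hc
      · simp only [Set.mem_singleton_iff] at h
        exact ⟨hc.1, by rw [h]⟩
      · exact absurd h (Set.notMem_empty _)
    obtain ⟨n₀, hn₀⟩ := hinf.nonempty
    have hn₀t : (ρ n₀).2 = true := hn₀.2
    have hall : ∀ m, n₀ ≤ m → (ρ m).2 = true := by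
      intro m hm
      induction m with
      | zero => exact Nat.le_zero.mp hm ▸ hn₀t
      | succ m ih =>
        rcases Nat.lt_or_ge n₀ (m + 1) with h | h
        · exact (htrue m (ih (Nat.lt_succ_iff.mp h))).2
        · exact le_antisymm hm h ▸ hn₀t
    refine ⟨n₀, fun i hi => ?_⟩
    have := (htrue i (hall i hi)).1
    rwa [hfst i] at this
  · rintro ⟨k, hk⟩
    refine ⟨fun n => (P n, decide (k + 1 ≤ n)), ?_, ?_, ?_⟩
    · simp [hP0]
    · intro n
      by_cases h : k + 1 ≤ n
      · have h1 : decide (k + 1 ≤ n) = true := by simp [h]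
        have h2 : decide (k + 1 ≤ n + 1) = true := by simp [Nat.le_succ_of_le h]
        simp only [h1, h2, ldbaStep]
        rw [if_pos ⟨hk n (Nat.le_of_succ_le h), by rw [← hPsucc]; exact hk (n + 1) (by omega)⟩]
        simp [hPsucc]
      · have h1 : decide (k + 1 ≤ n) = false := by simp [h]
        simp only [h1, ldbaStep]
        by_cases h2 : k + 1 ≤ n + 1
        · have h2' : decide (k + 1 ≤ n + 1) = true := by simp [h2]
          have hn : n = k := by omega
          right
          rw [if_pos (by rw [← hPsucc, hn]; exact hk (k + 1) (by omega))]
          simp [h2', hPsucc]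
          omega
        · have h2' : decide (k + 1 ≤ n + 1) = false := by simp [h2]
          left
          simp [h2', hPsucc]
          omega
    · apply Set.infinite_of_not_bddAbove
      intro ⟨b, hb⟩
      have : max b (k + 1) + 1 ∈ {n | (P n, decide (k + 1 ≤ n)) ∈ D.accept ×ˢ ({true} : Set Bool)} := by
        refine ⟨hk _ (by omega), ?_⟩
        simp only [Set.mem_singleton_iff]
        simp [Nat.le_succ_of_le (le_max_right b (k + 1))]
      have := hb this
      omega
end

section
/- Let A₀ and A₁ be nondeterministic Büchi automata over alphabet σ, with state types Q₀, Q₁, start states s₀, s₁, transition functions step₀, step₁, and accepting sets F₀ ⊆ Q₀, F₁ ⊆ Q₁. Define next : Q₀ × Q₁ × Bool → Bool by next(q₀,q₁,c) = !c if (c = false and q₀ ∈ F₀) or (c = true and q₁ ∈ F₁), and next(q₀,q₁,c) = c otherwise. Define the intersection product automaton with state type Q₀ × Q₁ × Bool, start state (s₀, s₁, false), transitions step((q₀,q₁,c), a) = {(q₀', q₁', next(q₀,q₁,c)) | q₀' ∈ step₀ q₀ a, q₁' ∈ step₁ q₁ a}, and accepting set {(q₀,q₁,c) | q₀ ∈ F₀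 and c = false}. Then for every infinite word w : ℕ → σ, the intersection product accepts w if and only if A₀ accepts w and A₁ accepts w. -/
open Classical in
/-- The alternating bit used in the intersection product of two Büchi automata:
the bit flips when the currently tracked automaton is in an accepting state. -/
noncomputable def nextBit {Q₀ Q₁ : Type*} (F₀ : Set Q₀) (F₁ : Set Q₁)
    (q₀ : Q₀) (q₁ : Q₁) (c : Bool) : Bool :=
  if (c = false ∧ q₀ ∈ F₀) ∨ (c = true ∧ q₁ ∈ F₁) then !c else c

lemma nextBit_false_of_not_mem {Q₀ Q₁ : Type*} {F₀ : Set Q₀} {F₁ : Set Q₁}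
    {q₀ : Q₀} (q₁ : Q₁) (h : q₀ ∉ F₀) : nextBit F₀ F₁ q₀ q₁ false = false := by
  simp [nextBit, h]

lemma nextBit_false_of_mem {Q₀ Q₁ : Type*} {F₀ : Set Q₀} {F₁ : Set Q₁}
    {q₀ : Q₀} (q₁ : Q₁) (h : q₀ ∈ F₀) : nextBit F₀ F₁ q₀ q₁ false = true := by
  simp [nextBit, h]

lemma nextBit_true_of_not_mem {Q₀ Q₁ : Type*} {F₀ : Set Q₀} {F₁ : Set Q₁}
    (q₀ : Q₀) {q₁ : Q₁} (h : q₁ ∉ F₁) : nextBit F₀ F₁ q₀ q₁ true = true := by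
  simp [nextBit, h]

lemma nextBit_true_of_mem {Q₀ Q₁ : Type*} {F₀ : Set Q₀} {F₁ : Set Q₁}
    (q₀ : Q₀) {q₁ : Q₁} (h : q₁ ∈ F₁) : nextBit F₀ F₁ q₀ q₁ true = false := by
  simp [nextBit, h]

lemma mem_of_nextBit_true_eq_false {Q₀ Q₁ : Type*} {F₀ : Set Q₀} {F₁ : Set Q₁}
    {q₀ : Q₀} {q₁ : Q₁} (h : nextBit F₀ F₁ q₀ q₁ true = false) : q₁ ∈ F₁ := by
  by_contra hq
  rw [nextBit_true_of_not_mem q₀ hq] at h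
  exact Bool.noConfusion h

/-- The bit component of the product run built from two runs. -/
noncomputable def bitRun {Q₀ Q₁ : Type*} (F₀ : Set Q₀) (F₁ : Set Q₁)
    (ρ₀ : ℕ → Q₀) (ρ₁ : ℕ → Q₁) : ℕ → Bool
  | 0 => false
  | n + 1 => nextBit F₀ F₁ (ρ₀ n) (ρ₁ n) (bitRun F₀ F₁ ρ₀ ρ₁ n)

/-- Correctness of the intersection product of two nondeterministic Büchi automata:
the product automaton with the alternating bit accepts exactly the intersection of the
two ω-languages. -/
theorem intersection_product_nba_correct {σ Q₀ Q₁ : Type*}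
    (s₀ : Q₀) (s₁ : Q₁)
    (step₀ : Q₀ → σ → Set Q₀) (step₁ : Q₁ → σ → Set Q₁)
    (F₀ : Set Q₀) (F₁ : Set Q₁)
    (w : ℕ → σ) :
    (∃ ρ : ℕ → Q₀ × Q₁ × Bool,
        ρ 0 = (s₀, s₁, false) ∧
        (∀ n, (ρ (n + 1)).1 ∈ step₀ (ρ n).1 (w n) ∧
              (ρ (n + 1)).2.1 ∈ step₁ (ρ n).2.1 (w n) ∧
              (ρ (n + 1)).2.2 = nextBit F₀ F₁ (ρ n).1 (ρ n).2.1 (ρ n).2.2) ∧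
        {n | (ρ n).1 ∈ F₀ ∧ (ρ n).2.2 = false}.Infinite) ↔
      ((∃ ρ₀ : ℕ → Q₀, ρ₀ 0 = s₀ ∧ (∀ n, ρ₀ (n + 1) ∈ step₀ (ρ₀ n) (w n)) ∧
          {n | ρ₀ n ∈ F₀}.Infinite) ∧
       (∃ ρ₁ : ℕ → Q₁, ρ₁ 0 = s₁ ∧ (∀ n, ρ₁ (n + 1) ∈ step₁ (ρ₁ n) (w n)) ∧
          {n | ρ₁ n ∈ F₁}.Infinite)) := by
  classical
  constructor
  · rintro ⟨ρ, h0, hstep, hinf⟩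
    refine ⟨⟨fun n => (ρ n).1, by simp [h0], fun n => (hstep n).1, ?_⟩,
            ⟨fun n => (ρ n).2.1, by simp [h0], fun n => (hstep n).2.1, ?_⟩⟩
    · exact hinf.mono fun n hn => hn.1
    · -- infinitely many visits of F₁
      apply Set.infinite_of_forall_exists_gt
      intro N
      obtain ⟨n, hn, hNn⟩ := hinf.exists_gt N
      have hbn1 : (ρ (n + 1)).2.2 = true := by
        rw [(hstep n).2.2, hn.2, nextBit_false_of_mem _ hn.1]
      obtain ⟨m, hm, hnm⟩ := hinf.exists_gt (n + 1)
      have hex : ∃ k, n + 1 ≤ k ∧ (ρ k).2.2 = false := ⟨m, hnm.le, hm.2⟩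
      obtain ⟨hk1, hk2⟩ := Nat.find_spec hex
      have hkk : n + 1 < Nat.find hex := by
        rcases lt_or_eq_of_le hk1 with h | h
        · exact h
        · rw [← h] at hk2; rw [hbn1] at hk2; exact absurd hk2 (by simp)
      have hprev : (ρ (Nat.find hex - 1)).2.2 = true := by
        by_contra h
        have hh : n + 1 ≤ Nat.find hex - 1 ∧ (ρ (Nat.find hex - 1)).2.2 = false :=
          ⟨Nat.le_sub_one_of_lt hkk, by simpa using h⟩
        have := Nat.find_min' hex hh
        omega
      have hk1' := Nat.sub_add_cancel (le_trans (Nat.le_add_left 1 n) (le_of_lt hkk))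
      have hflip : nextBit F₀ F₁ (ρ (Nat.find hex - 1)).1 (ρ (Nat.find hex - 1)).2.1 true = false := by
        rw [← hprev, ← (hstep (Nat.find hex - 1)).2.2, hk1', hk2]
      exact ⟨Nat.find hex - 1, mem_of_nextBit_true_eq_false hflip, by omega⟩
  · rintro ⟨⟨ρ₀, h₀0, h₀s, h₀i⟩, ⟨ρ₁, h₁0, h₁s, h₁i⟩⟩
    set c := bitRun F₀ F₁ ρ₀ ρ₁ with hc
    refine ⟨fun n => (ρ₀ n, ρ₁ n, c n), by simp [h₀0, h₁0, hc, bitRun],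
      fun n => ⟨h₀s n, h₁s n, rfl⟩, ?_⟩
    -- key lemmas about c
    have L1 : ∀ n, c n = false → ∃ m, n ≤ m ∧ ρ₀ m ∈ F₀ ∧ c m = false := by
      intro n hn
      obtain ⟨m0, hm0, hm0n⟩ := h₀i.exists_gt n
      have hex : ∃ m, n ≤ m ∧ ρ₀ m ∈ F₀ := ⟨m0, hm0n.le, hm0⟩
      obtain ⟨hm1, hm2⟩ := Nat.find_spec hex
      refine ⟨Nat.find hex, hm1, hm2, ?_⟩
      -- c stays false on [n, m]
      have : ∀ k, n ≤ k → k ≤ Nat.find hex → c k = false := by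
        intro k hk
        induction k, hk using Nat.le_induction with
        | base => intro _; exact hn
        | succ k hk ih =>
          intro hkm
          have hck : c k = false := ih (by omega)
          have hρk : ρ₀ k ∉ F₀ := by
            intro hmem
            have := Nat.find_min' hex ⟨hk, hmem⟩
            omega
          show nextBit F₀ F₁ (ρ₀ k) (ρ₁ k) (c k) = false
          rw [hck, nextBit_false_of_not_mem _ hρk]
      exact this (Nat.find hex) hm1 le_rfl
    have L2 : ∀ n, c n = true → ∃ m, n < m ∧ c m = false := by
      intro n hn
      obtain ⟨m0, hm0, hm0n⟩ := h₁i.exists_gt n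
      have hex : ∃ m, n ≤ m ∧ ρ₁ m ∈ F₁ := ⟨m0, hm0n.le, hm0⟩
      obtain ⟨hm1, hm2⟩ := Nat.find_spec hex
      have hstay : ∀ k, n ≤ k → k ≤ Nat.find hex → c k = true := by
        intro k hk
        induction k, hk using Nat.le_induction with
        | base => intro _; exact hn
        | succ k hk ih =>
          intro hkm
          have hck : c k = true := ih (by omega)
          have hρk : ρ₁ k ∉ F₁ := by
            intro hmem
            have := Nat.find_min' hex ⟨hk, hmem⟩
            omega
          show nextBit F₀ F₁ (ρ₀ k) (ρ₁ k) (c k) = true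
          rw [hck, nextBit_true_of_not_mem _ hρk]
      refine ⟨Nat.find hex + 1, by omega, ?_⟩
      show nextBit F₀ F₁ (ρ₀ (Nat.find hex)) (ρ₁ (Nat.find hex)) (c (Nat.find hex)) = false
      rw [hstay (Nat.find hex) hm1 le_rfl, nextBit_true_of_mem _ hm2]
    have L3 : ∀ N, ∃ m, N ≤ m ∧ c m = false := by
      intro N
      induction N with
      | zero => exact ⟨0, le_rfl, rfl⟩
      | succ N ih =>
        obtain ⟨m, hm, hmf⟩ := ih
        cases hcm : c (m + 1) with
        | false => exact ⟨m + 1, by omega, hcm⟩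
        | true =>
          obtain ⟨m', hm', hm'f⟩ := L2 (m + 1) hcm
          exact ⟨m', by omega, hm'f⟩
    apply Set.infinite_of_forall_exists_gt
    intro N
    obtain ⟨m, hm, hmf⟩ := L3 (N + 1)
    obtain ⟨m', hm', hm'F, hm'f⟩ := L1 m hmf
    exact ⟨m', ⟨hm'F, hm'f⟩, by omega⟩
end

section
/- Let A₀ and A₁ be nondeterministic Büchi automata over alphabet σ with state types Q₀, Q₁, start states s₀, s₁, transition functions step₀, step₁, and accepting sets F₀ ⊆ Q₀, F₁ ⊆ Q₁, and let the intersection product with the alternating bit be defined as: next(q₀,q₁,c) = !c if (c = false and q₀ ∈ F₀) or (c = true and q₁ ∈ F₁) and next(q₀,q₁,c) = c otherwise; transitions step((q₀,q₁,c), a) = {(q₀', q₁', next(q₀,q₁,c)) | q₀' ∈ step₀ q₀ a, q₁' ∈ step₁ q₁ a} from start state (s₀,s₁,false). If ρ : ℕ → Q₀ × Q₁ × Bool is a run of the intersection product on an infinite word w such that {n | (ρ n).1 ∈ F₀ and (ρ n).2.2 = false} is infinite, then the first projection n ↦ (ρ n).1 is a run of A₀ on w visiting F₀ infinitely often, and the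 second projection n ↦ (ρ n).2.1 is a run of A₁ on w visiting F₁ infinitely often. -/
/-- If a run of the intersection product visits its accepting set infinitely often,
then its projections are runs of the component automata visiting their respective
accepting sets infinitely often. -/
theorem intersection_product_run_projections {σ Q₀ Q₁ : Type*}
    (s₀ : Q₀) (s₁ : Q₁)
    (step₀ : Q₀ → σ → Set Q₀) (step₁ : Q₁ → σ → Set Q₁)
    (F₀ : Set Q₀) (F₁ : Set Q₁)
    (w : ℕ → σ) (ρ : ℕ → Q₀ × Q₁ × Bool)
    (h0 : ρ 0 = (s₀, s₁, false))
    (hs : ∀ n, (ρ (n + 1)).1 ∈ step₀ (ρ n).1 (w n) ∧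
               (ρ (n + 1)).2.1 ∈ step₁ (ρ n).2.1 (w n) ∧
               (ρ (n + 1)).2.2 = nextBit F₀ F₁ (ρ n).1 (ρ n).2.1 (ρ n).2.2)
    (hacc : {n | (ρ n).1 ∈ F₀ ∧ (ρ n).2.2 = false}.Infinite) :
    ((ρ 0).1 = s₀ ∧ (∀ n, (ρ (n + 1)).1 ∈ step₀ (ρ n).1 (w n)) ∧
        {n | (ρ n).1 ∈ F₀}.Infinite) ∧
    ((ρ 0).2.1 = s₁ ∧ (∀ n, (ρ (n + 1)).2.1 ∈ step₁ (ρ n).2.1 (w n)) ∧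
        {n | (ρ n).2.1 ∈ F₁}.Infinite) := by
  classical
  refine ⟨⟨by rw [h0], fun n => (hs n).1,
      hacc.mono (fun n hn => hn.1)⟩,
    ⟨by rw [h0], fun n => (hs n).2.1, ?_⟩⟩
  -- key: the F₁ set is infinite
  apply Set.infinite_of_not_bddAbove
  rintro ⟨N, hN⟩
  -- find n ≥ N+1 in hacc
  obtain ⟨n, hn, hnN⟩ := hacc.exists_gt N
  obtain ⟨hnF, hnb⟩ := hn
  -- bit at n+1 is true
  have hb1 : (ρ (n + 1)).2.2 = true := by
    have := (hs n).2.2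
    rw [nextBit, hnb] at this
    simp only [hnF, and_true] at this
    simpa using this
  -- find m > n+1 with bit false
  obtain ⟨m, hm, hmgt⟩ := hacc.exists_gt (n + 1)
  have hP : ∃ j, (ρ (n + 1 + j)).2.2 = false := by
    refine ⟨m - (n + 1), ?_⟩
    rw [Nat.add_sub_cancel' (le_of_lt hmgt)]
    exact hm.2
  set j₀ := Nat.find hP with hj₀
  have hj₀pos : 0 < j₀ := by
    rcases Nat.eq_zero_or_pos j₀ with h | h
    · exfalso
      have := Nat.find_spec hP
      rw [← hj₀, h] at this
      simp only [Nat.add_zero] at this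
      rw [hb1] at this; exact Bool.noConfusion this
    · exact h
  -- bit at n + j₀ is true
  have hprev : (ρ (n + 1 + (j₀ - 1))).2.2 = true := by
    have hlt : j₀ - 1 < j₀ := Nat.sub_lt hj₀pos one_pos
    have := Nat.find_min hP hlt
    simpa using this
  have hk : (ρ (n + 1 + (j₀ - 1) + 1)).2.2 = false := by
    have : n + 1 + (j₀ - 1) + 1 = n + 1 + j₀ := by omega
    rw [this]
    exact Nat.find_spec hP
  -- flip true → false forces F₁
  have hF1 : (ρ (n + 1 + (j₀ - 1))).2.1 ∈ F₁ := by
    have hstep := (hs (n + 1 + (j₀ - 1))).2.2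
    rw [hk, nextBit, hprev] at hstep
    by_contra hcon
    simp [hcon] at hstep
  have : n + 1 + (j₀ - 1) ≤ N := hN hF1
  omega
end

section
/- Let A₀ and A₁ be nondeterministic Büchi automata over alphabet σ with state types Q₀, Q₁, start states s₀, s₁, transition functions step₀, step₁, and accepting sets F₀ ⊆ Q₀, F₁ ⊆ Q₁, and define next(q₀,q₁,c) = !c if (c = false and q₀ ∈ F₀) or (c = true and q₁ ∈ F₁) and next(q₀,q₁,c) = c otherwise. Suppose ρ₀ is a run of A₀ on an infinite word w with {n | ρ₀ n ∈ F₀} infinite, and ρ₁ is a run of A₁ on w with {n | ρ₁ n ∈ F₁} infinite. Define c : ℕ → Bool by c 0 = false and c (n+1) = next(ρ₀ n, ρ₁ n, c n). Then ρ := n ↦ (ρ₀ n, ρ₁ n, c n) is a run of the intersection product automaton on w from start state (s₀, s₁, false) (with transitions step((q₀,q₁,c), a) = {(q₀', q₁', next(q₀,q₁,c)) | q₀' ∈ step₀ q₀ a, q₁' ∈ step₁ q₁ a}), and {n | ρ₀ n ∈ F₀ and c n = false} is infinite. -/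
/-- Two accepting runs of the component automata combine, via the alternating bit,
into an accepting run of the intersection product automaton. -/
theorem intersection_product_combine_runs {σ Q₀ Q₁ : Type*}
    (s₀ : Q₀) (s₁ : Q₁)
    (step₀ : Q₀ → σ → Set Q₀) (step₁ : Q₁ → σ → Set Q₁)
    (F₀ : Set Q₀) (F₁ : Set Q₁)
    (w : ℕ → σ) (ρ₀ : ℕ → Q₀) (ρ₁ : ℕ → Q₁)
    (h₀0 : ρ₀ 0 = s₀) (h₀s : ∀ n, ρ₀ (n + 1) ∈ step₀ (ρ₀ n) (w n))
    (h₀acc : {n | ρ₀ n ∈ F₀}.Infinite)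
    (h₁0 : ρ₁ 0 = s₁) (h₁s : ∀ n, ρ₁ (n + 1) ∈ step₁ (ρ₁ n) (w n))
    (h₁acc : {n | ρ₁ n ∈ F₁}.Infinite)
    (c : ℕ → Bool) (hc0 : c 0 = false)
    (hcs : ∀ n, c (n + 1) = nextBit F₀ F₁ (ρ₀ n) (ρ₁ n) (c n)) :
    ((fun n => ((ρ₀ n, ρ₁ n, c n) : Q₀ × Q₁ × Bool)) 0 = (s₀, s₁, false) ∧
      (∀ n, ρ₀ (n + 1) ∈ step₀ (ρ₀ n) (w n) ∧
            ρ₁ (n + 1) ∈ step₁ (ρ₁ n) (w n) ∧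
            c (n + 1) = nextBit F₀ F₁ (ρ₀ n) (ρ₁ n) (c n))) ∧
    {n | ρ₀ n ∈ F₀ ∧ c n = false}.Infinite := by
  refine ⟨⟨by simp [h₀0, h₁0, hc0], fun n => ⟨h₀s n, h₁s n, hcs n⟩⟩, ?_⟩
  by_contra hfin
  rw [Set.not_infinite] at hfin
  obtain ⟨N, hN⟩ := hfin.bddAbove
  -- every n > N has c n = true
  have key : ∀ n, N < n → c n = true := by
    intro n hn
    by_contra hcn
    have hcn : c n = false := by simpa using hcn
    have hfalse : ∀ m, n ≤ m → c m = false := by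
      intro m hm
      induction m with
      | zero => exact hc0
      | succ k ih =>
        rcases Nat.lt_or_ge k n with h | h
        · have : n = k + 1 := by omega
          exact this ▸ hcn
        · have hk : c k = false := ih h
          have hnot : ρ₀ k ∉ F₀ := by
            intro hmem
            have : k ≤ N := hN ⟨hmem, hk⟩
            omega
          rw [hcs k, nextBit, if_neg]
          · exact hk
          · simp [hk, hnot]
    obtain ⟨m, hm, hm'⟩ := h₀acc.exists_gt (max n N)
    have : m ≤ N := hN ⟨hm, hfalse m (by omega)⟩
    omega
  obtain ⟨m, hm, hm'⟩ := h₁acc.exists_gt N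
  have h1 : c m = true := key m hm'
  have h2 : c (m + 1) = true := key (m + 1) (by omega)
  rw [hcs m, nextBit, if_pos (Or.inr ⟨h1, hm⟩), h1] at h2
  simp at h2
end
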